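/- arXiv:1801.03221 — 7 statements merged into one kernel-verified Lean document; each statement's English description precedes it below -/
import Mathlib

section
/- Let ℓ be a prime number, n ≥ 1 an integer, and c a rational number with c > 1/(ℓ−1). Let U be an n × n matrix over K such that every entry of U − 1 has norm at most ℓ^{−c} (where 1 denotes the identity matrix and ℓ^{−c} is the real number (ℓ:ℝ) raised to the power −c). If U is quasi-unipotent, then U is unipotent. -/
/-!
Let `μ` be an eigenvalue of `U - 1`. Looking at the largest coordinate of an eigenvector, the
ultrametric inequality gives `‖μ‖ ≤ ℓ^{-c}`; quasi-unipotence makes `1 + μ` a root of unity.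
A root of unity `ζ ≠ 1` of prime order `q` satisfies `‖q‖ ≤ ‖ζ - 1‖^(q-1)`, by expanding
`(1 + ε)^q = 1` and using that `q` divides the inner binomial coefficients. Since
`ℓ^{-c(ℓ-1)} < ℓ⁻¹ = ‖ℓ‖` and `‖q‖ = 1` for primes `q ≠ ℓ`, no power of `1 + μ` can be such a
`ζ`, so `μ = 0`. Over an algebraically closed field this forces `U - 1` to be nilpotent.
-/

open Finset Polynomial Matrix Module.End IsUltrametricDist

theorem IsOfFinOrder.exists_orderOf_pow_eq_prime {M : Type*} [Monoid M] {x : M}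
    (hx : IsOfFinOrder x) (hx1 : x ≠ 1) : ∃ s q, q.Prime ∧ orderOf (x ^ s) = q := by
  have hq : (orderOf x).minFac.Prime := Nat.minFac_prime (mt orderOf_eq_one_iff.mp hx1)
  exact ⟨_, _, hq, orderOf_pow_orderOf_div hx.orderOf_pos.ne' (Nat.minFac_dvd _)⟩

section Ultrametric

variable {K : Type*} [NormedField K] [IsUltrametricDist K]

theorem norm_natCast_le_of_dvd {a b : ℕ} (h : a ∣ b) : ‖(b : K)‖ ≤ ‖(a : K)‖ := by
  obtain ⟨j, rfl⟩ := h
  rw [Nat.cast_mul, norm_mul]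
  exact mul_le_of_le_one_right (norm_nonneg _) (norm_natCast_le_one K j)

theorem norm_intCast_mul_le (u : ℤ) (x : K) : ‖(u : K) * x‖ ≤ ‖x‖ := by
  rw [norm_mul]
  exact mul_le_of_le_one_left (norm_nonneg _) (norm_intCast_le_one K u)

theorem norm_natCast_eq_one_of_coprime {ℓ q : ℕ} (hℓ : ‖(ℓ : K)‖ < 1) (h : q.Coprime ℓ) :
    ‖(q : K)‖ = 1 := by
  obtain ⟨u, v, huv⟩ := Nat.isCoprime_iff_coprime.mpr h
  have hK : (u : K) * q + (v : K) * ℓ = 1 := by exact_mod_cast congrArg (Int.cast : ℤ → K) huv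
  have h1 : 1 ≤ max ‖(q : K)‖ ‖(ℓ : K)‖ :=
    calc 1 = ‖(u : K) * q + (v : K) * ℓ‖ := by rw [hK, norm_one]
      _ ≤ max ‖(u : K) * q‖ ‖(v : K) * ℓ‖ := norm_add_le_max _ _
      _ ≤ max ‖(q : K)‖ ‖(ℓ : K)‖ := max_le_max (norm_intCast_mul_le u _) (norm_intCast_mul_le v _)
  exact le_antisymm (norm_natCast_le_one K q) ((le_max_iff.mp h1).resolve_right hℓ.not_ge)

theorem norm_pow_sub_one_le {x : K} (hx : ‖x‖ ≤ 1) (k : ℕ) : ‖x ^ k - 1‖ ≤ ‖x - 1‖ := by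
  induction k with
  | zero => simp
  | succ k ih =>
    have hxk : ‖x ^ k * (x - 1)‖ ≤ ‖x - 1‖ := by
      rw [norm_mul, norm_pow]
      exact mul_le_of_le_one_left (norm_nonneg _) (pow_le_one₀ (norm_nonneg _) hx)
    calc ‖x ^ (k + 1) - 1‖ = ‖x ^ k * (x - 1) + (x ^ k - 1)‖ := by ring_nf
      _ ≤ ‖x - 1‖ := (norm_add_le_max _ _).trans (max_le hxk ih)

theorem norm_natCast_le_norm_sub_one_pow {ζ : K} {q : ℕ} (hq : q.Prime) (hζ : ζ ^ q = 1)
    (hζ1 : ζ ≠ 1) : ‖(q : K)‖ ≤ ‖ζ - 1‖ ^ (q - 1) := by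
  set ε := ζ - 1 with hε
  rcases le_or_gt 1 ‖ε‖ with hε1 | hε1
  · exact (norm_natCast_le_one K q).trans (one_le_pow₀ hε1)
  obtain ⟨p, rfl⟩ : ∃ p, q = p + 1 := ⟨q - 1, by have := hq.pos; omega⟩
  rw [add_tsub_cancel_right]
  have hsum : ((p + 1 : ℕ) : K) = -∑ k ∈ range p, ((p + 1).choose (k + 2) : K) * ε ^ (k + 1) := by
    have hexp := add_pow ε 1 (p + 1)
    rw [hε, sub_add_cancel, hζ, sum_range_succ', sum_range_succ'] at hexp
    simp only [one_pow, mul_one, zero_add, Nat.choose_one_right, Nat.choose_zero_right, pow_zero,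
      pow_one, Nat.cast_one] at hexp
    have hfactor : ∑ k ∈ range p, (ζ - 1) ^ (k + 1 + 1) * ((p + 1).choose (k + 1 + 1) : K) =
        ε * ∑ k ∈ range p, ((p + 1).choose (k + 2) : K) * ε ^ (k + 1) := by
      rw [mul_sum]
      exact sum_congr rfl fun k _ => by ring
    have hε0 : ε ≠ 0 := sub_ne_zero.mpr hζ1
    rw [hfactor] at hexp
    apply mul_left_cancel₀ hε0
    linear_combination -hexp
  have hterm : ∀ k ∈ range p, ‖((p + 1).choose (k + 2) : K) * ε ^ (k + 1)‖ ≤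
      max (‖((p + 1 : ℕ) : K)‖ * ‖ε‖) (‖ε‖ ^ p) := by
    intro k hk
    rw [norm_mul, norm_pow]
    rcases (Nat.lt_or_eq_of_le (mem_range.mp hk : k + 1 ≤ p)) with hkp | hkp
    · refine le_max_of_le_left (mul_le_mul (norm_natCast_le_of_dvd ?_) ?_ (by positivity)
        (norm_nonneg _))
      · exact hq.dvd_choose_self (by omega) (by omega)
      · exact pow_le_of_le_one (norm_nonneg _) hε1.le (by omega)
    · obtain rfl : k + 1 = p := hkp
      simp
  have hle : ‖((p + 1 : ℕ) : K)‖ ≤ max (‖((p + 1 : ℕ) : K)‖ * ‖ε‖) (‖ε‖ ^ p) :=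
    calc ‖((p + 1 : ℕ) : K)‖ = ‖∑ k ∈ range p, ((p + 1).choose (k + 2) : K) * ε ^ (k + 1)‖ := by
          rw [hsum, norm_neg]
      _ ≤ _ := norm_sum_le_of_forall_le_of_nonneg (by positivity) hterm
  rcases le_max_iff.mp hle with h | h
  · -- `‖q‖ ≤ ‖q‖ * ‖ε‖` with `‖ε‖ < 1` forces `‖q‖ = 0`
    nlinarith [norm_nonneg ((p + 1 : ℕ) : K), pow_nonneg (norm_nonneg ε) p]
  · exact h

theorem eq_one_of_pow_eq_one_of_norm_sub_one_pow_lt {x : K} {m : ℕ} (hm : m ≠ 0) (hx : x ^ m = 1)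
    (h : ∀ q : ℕ, q.Prime → ‖x - 1‖ ^ (q - 1) < ‖(q : K)‖) : x = 1 := by
  by_contra hx1
  obtain ⟨s, q, hq, hord⟩ :=
    (isOfFinOrder_iff_pow_eq_one.mpr ⟨m, Nat.pos_of_ne_zero hm, hx⟩).exists_orderOf_pow_eq_prime hx1
  have hxnorm : ‖x‖ ≤ 1 :=
    ((pow_eq_one_iff_of_nonneg (norm_nonneg x) hm).mp (by rw [← norm_pow, hx, norm_one])).le
  have hζ1 : x ^ s ≠ 1 := fun h1 => hq.one_lt.ne' (hord ▸ orderOf_eq_one_iff.mpr h1)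
  have := calc ‖(q : K)‖ ≤ ‖x ^ s - 1‖ ^ (q - 1) :=
        norm_natCast_le_norm_sub_one_pow hq (hord ▸ pow_orderOf_eq_one _) hζ1
    _ ≤ ‖x - 1‖ ^ (q - 1) := pow_le_pow_left₀ (norm_nonneg _) (norm_pow_sub_one_le hxnorm s) _
    _ < ‖(q : K)‖ := h q hq
  exact this.false

theorem pow_sub_one_lt_norm_natCast_of_prime {ℓ : ℕ} (hℓ : ℓ.Prime) (hℓ1 : ‖(ℓ : K)‖ < 1)
    {r : ℝ} (hr : 0 ≤ r) (hrℓ : r ^ (ℓ - 1) < ‖(ℓ : K)‖) {q : ℕ} (hq : q.Prime) :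
    r ^ (q - 1) < ‖(q : K)‖ := by
  rcases eq_or_ne q ℓ with rfl | hqℓ
  · exact hrℓ
  have hr1 : r < 1 := (pow_lt_one_iff_of_nonneg hr (by have := hℓ.two_le; omega)).mp (hrℓ.trans hℓ1)
  rw [norm_natCast_eq_one_of_coprime hℓ1 ((Nat.coprime_primes hq hℓ).mpr hqℓ)]
  exact pow_lt_one₀ hr hr1 (by have := hq.two_le; omega)

theorem Matrix.norm_le_of_hasEigenvalue_toLin' {ι : Type*} [Fintype ι] [DecidableEq ι]
    {A : Matrix ι ι K} {r : ℝ} (hA : ∀ i j, ‖A i j‖ ≤ r) {μ : K}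
    (hμ : HasEigenvalue (toLin' A) μ) : ‖μ‖ ≤ r := by
  obtain ⟨v, hv⟩ := hμ.exists_hasEigenvector
  have hAv : A *ᵥ v = μ • v := by simpa using hv.apply_eq_smul
  obtain ⟨j, hj⟩ := Function.ne_iff.mp hv.2
  have : Nonempty ι := ⟨j⟩
  obtain ⟨i, hi⟩ := Finite.exists_max (fun i => ‖v i‖)
  have hvi : 0 < ‖v i‖ := (norm_pos_iff.mpr hj).trans_le (hi j)
  have hr : 0 ≤ r := (norm_nonneg _).trans (hA i i)
  refine le_of_mul_le_mul_right ?_ hvi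
  calc ‖μ‖ * ‖v i‖ = ‖(A *ᵥ v) i‖ := by rw [hAv, Pi.smul_apply, smul_eq_mul, norm_mul]
    _ = ‖∑ j, A i j * v j‖ := rfl
    _ ≤ r * ‖v i‖ := norm_sum_le_of_forall_le_of_nonneg (by positivity) fun j _ => by
        rw [norm_mul]; exact mul_le_mul (hA i j) (hi j) (norm_nonneg _) hr

end Ultrametric

theorem rpow_neg_pow_sub_one_lt_inv {ℓ : ℕ} (hℓ : 1 < ℓ) {c : ℝ} (hc : 1 < c * (ℓ - 1)) :
    ((ℓ : ℝ) ^ (-c)) ^ (ℓ - 1) < (ℓ : ℝ)⁻¹ := by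
  have hℓR : (1 : ℝ) < ℓ := by exact_mod_cast hℓ
  rw [← Real.rpow_natCast, ← Real.rpow_mul (by positivity), Nat.cast_sub hℓ.le, Nat.cast_one,
    ← Real.rpow_neg_one]
  exact Real.rpow_lt_rpow_of_exponent_lt hℓR (by linarith)

namespace Module.End

variable {K V : Type*} [Field K] [AddCommGroup V] [Module K V]

theorem hasEigenvalue_sub_one_iff {f : End K V} {μ : K} :
    (f - 1).HasEigenvalue μ ↔ f.HasEigenvalue (μ + 1) := by
  rw [← one_smul K (1 : End K V), one_eq_id, hasEigenvalue_sub_iff]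

theorem HasEigenvalue.pow_eq_one_of_isNilpotent {f : End K V} {μ : K} (hμ : f.HasEigenvalue μ)
    {m : ℕ} (hf : IsNilpotent (f ^ m - 1)) : μ ^ m = 1 := by
  have h : (f ^ m - 1).HasEigenvalue (μ ^ m - 1) := by
    rw [hasEigenvalue_sub_one_iff, sub_add_cancel]
    exact hμ.pow m
  exact sub_eq_zero.mp (h.isNilpotent_of_isNilpotent hf).eq_zero

theorem isNilpotent_of_forall_hasEigenvalue_eq_zero [IsAlgClosed K] [FiniteDimensional K V]
    (f : End K V) (h : ∀ μ, f.HasEigenvalue μ → μ = 0) : IsNilpotent f := by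
  have hroots : f.charpoly.roots = Multiset.replicate f.charpoly.roots.card 0 :=
    Multiset.eq_replicate_card.mpr fun μ hμ =>
      h μ ((hasEigenvalue_iff_isRoot_charpoly f μ).mpr (isRoot_of_mem_roots hμ))
  obtain ⟨k, hX⟩ : ∃ k, f.charpoly = X ^ k := by
    refine ⟨f.charpoly.roots.card, ?_⟩
    conv_lhs => rw [(IsAlgClosed.splits f.charpoly).eq_prod_roots_of_monic f.charpoly_monic,
      hroots, Multiset.map_replicate, Multiset.prod_replicate, map_zero, sub_zero]
  exact ⟨k, by simpa [hX] using f.aeval_self_charpoly⟩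

end Module.End

theorem stmt0_general (ℓ : ℕ) (hℓprime : ℓ.Prime)
    (K : Type*) [NormedField K] [IsAlgClosed K]
    (hna : IsNonarchimedean (fun x : K => ‖x‖))
    (hnorm : ‖(ℓ : K)‖ = (ℓ : ℝ)⁻¹)
    (n : ℕ)
    (c : ℚ) (hc : 1 / ((ℓ : ℚ) - 1) < c)
    (U : Matrix (Fin n) (Fin n) K)
    (hU : ∀ i j, ‖(U - 1) i j‖ ≤ (ℓ : ℝ) ^ (-(c : ℝ)))
    (hqu : ∃ m : ℕ, 1 ≤ m ∧ IsNilpotent (U ^ m - 1)) :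
    IsNilpotent (U - 1) := by
  have : IsUltrametricDist K := isUltrametricDist_of_isNonarchimedean_norm hna
  obtain ⟨m, hm, hnil⟩ := hqu
  have hℓ1 : ‖(ℓ : K)‖ < 1 := hnorm ▸ inv_lt_one_of_one_lt₀ (by exact_mod_cast hℓprime.one_lt)
  have hcℓ : (1 : ℝ) < c * (ℓ - 1) := by
    have hℓ : (1 : ℚ) < ℓ := by exact_mod_cast hℓprime.one_lt
    exact_mod_cast (div_lt_iff₀ (sub_pos.mpr hℓ)).mp hc
  have hprimes (q : ℕ) (hq : q.Prime) : ((ℓ : ℝ) ^ (-(c : ℝ))) ^ (q - 1) < ‖(q : K)‖ :=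
    pow_sub_one_lt_norm_natCast_of_prime hℓprime hℓ1 (by positivity)
      (hnorm ▸ rpow_neg_pow_sub_one_lt_inv hℓprime.one_lt hcℓ) hq
  rw [← IsNilpotent.map_iff (toLinAlgEquiv' (R := K) (n := Fin n)).injective]
  refine isNilpotent_of_forall_hasEigenvalue_eq_zero _ fun μ hμ => ?_
  have hμU : HasEigenvalue (toLinAlgEquiv' U) (μ + 1) := by
    rwa [map_sub, map_one, hasEigenvalue_sub_one_iff] at hμ
  have hroot : (μ + 1) ^ m = 1 :=
    hμU.pow_eq_one_of_isNilpotent (by simpa using hnil.map (toLinAlgEquiv' (R := K)))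
  have hμr : ‖μ‖ ≤ (ℓ : ℝ) ^ (-(c : ℝ)) := Matrix.norm_le_of_hasEigenvalue_toLin' hU hμ
  simpa using eq_one_of_pow_eq_one_of_norm_sub_one_pow_lt (by omega) hroot fun q hq =>
    (pow_le_pow_left₀ (norm_nonneg _) (by simpa using hμr) _).trans_lt (hprimes q hq)

/-- Let `ℓ` be a prime, `K` an algebraically closed normed field with
nonarchimedean norm satisfying `‖(ℓ : K)‖ = (ℓ : ℝ)⁻¹`. Let `n ≥ 1`, and let `c` be a
rational number with `c > 1/(ℓ-1)`. If `U` is an `n × n` matrix over `K` all of whose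
entries of `U - 1` have norm at most `ℓ^{-c}`, and `U` is quasi-unipotent, then `U` is
unipotent. -/
theorem stmt0 (ℓ : ℕ) (hℓprime : ℓ.Prime)
    (K : Type*) [NormedField K] [IsAlgClosed K]
    (hna : IsNonarchimedean (fun x : K => ‖x‖))
    (hnorm : ‖(ℓ : K)‖ = (ℓ : ℝ)⁻¹)
    (n : ℕ) (hn : 1 ≤ n)
    (c : ℚ) (hc : 1 / ((ℓ : ℚ) - 1) < c)
    (U : Matrix (Fin n) (Fin n) K)
    (hU : ∀ i j, ‖(U - 1) i j‖ ≤ (ℓ : ℝ) ^ (-(c : ℝ)))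
    (hqu : ∃ m : ℕ, 1 ≤ m ∧ IsNilpotent (U ^ m - 1)) :
    IsNilpotent (U - 1) :=
  stmt0_general ℓ hℓprime K hna hnorm n c hc U hU hqu
end

section
/- Let k be a field of characteristic 0, n an integer, M an n × n matrix over k, and c ∈ k an element that is not a root of unity (i.e. c^m ≠ 1 for every integer m ≥ 1). If M is similar to c • M, that is, there exists g ∈ GLₙ(k) with g M g⁻¹ = c • M, then M is nilpotent. -/
/-!
The reversed characteristic polynomial `p = det (1 - X • M)` turns into `p.comp (C c * X)` when
`M` is replaced by `c • M`, and it is a similarity invariant. Hence `p(cX) = p(X)`, i.e.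
`c ^ i * pᵢ = pᵢ` for every coefficient; as `c` is not a root of unity, `p = p₀ = 1`. Reversing,
`charpoly M = X ^ n`, and Cayley–Hamilton gives `M ^ n = 0`.
-/

open Polynomial Matrix

namespace Polynomial

variable {R : Type*} [CommRing R] [NoZeroDivisors R]

theorem eq_C_of_comp_C_mul_X_eq_self {p : R[X]} {c : R} (hc : ∀ m : ℕ, 1 ≤ m → c ^ m ≠ 1)
    (hp : p.comp (C c * X) = p) : p = C (p.coeff 0) := by
  ext i
  rcases Nat.eq_zero_or_pos i with rfl | hi
  · simp
  have hcoeff : p.coeff i * (c ^ i - 1) = 0 := by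
    rw [mul_sub, mul_one, ← comp_C_mul_X_coeff, hp, sub_self]
  rw [coeff_C, if_neg hi.ne']
  exact (mul_eq_zero.mp hcoeff).resolve_right (sub_ne_zero.mpr (hc i hi))

end Polynomial

namespace Matrix

variable {n R : Type*} [Fintype n] [DecidableEq n] [CommRing R]

theorem charpolyRev_smul (c : R) (M : Matrix n n R) :
    (c • M).charpolyRev = M.charpolyRev.comp (C c * X) := by
  rw [charpolyRev, charpolyRev, ← coe_compRingHom_apply, RingHom.map_det, map_sub, map_one]
  congr 2
  ext i j : 1
  simp only [smul_apply, map_apply, RingHom.mapMatrix_apply, coe_compRingHom, smul_eq_mul,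
    map_mul, mul_comp, X_comp, C_comp]
  ring

theorem charpoly_eq_X_pow_of_charpolyRev_eq_one {M : Matrix n n R} (h : M.charpolyRev = 1) :
    M.charpoly = X ^ Fintype.card n := by
  nontriviality R
  rw [← reflect_reflect (N := Fintype.card n) (p := M.charpoly), ← M.charpoly_natDegree_eq_dim,
    ← reverse, reverse_charpoly, h, reflect_one]

theorem isNilpotent_of_charpolyRev_eq_one {M : Matrix n n R} (h : M.charpolyRev = 1) :
    IsNilpotent M :=
  ⟨Fintype.card n, by
    simpa [charpoly_eq_X_pow_of_charpolyRev_eq_one h] using M.aeval_self_charpoly⟩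

end Matrix

theorem stmt1_general (k : Type*) [Field k]
    (n : ℕ) (M : Matrix (Fin n) (Fin n) k)
    (c : k) (hc : ∀ m : ℕ, 1 ≤ m → c ^ m ≠ 1)
    (g : GL (Fin n) k)
    (hsim : (g : Matrix (Fin n) (Fin n) k) * M * (↑g⁻¹ : Matrix (Fin n) (Fin n) k) = c • M) :
    IsNilpotent M := by
  have hconj : M.charpolyRev.comp (C c * X) = M.charpolyRev := by
    rw [← charpolyRev_smul, ← hsim, coe_units_inv, ← reverse_charpoly, ← reverse_charpoly,
      charpoly_units_conj]
  apply isNilpotent_of_charpolyRev_eq_one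
  rw [eq_C_of_comp_C_mul_X_eq_self hc hconj, coeff_zero_eq_eval_zero, eval_charpolyRev, C_1]

/-- Let `k` be a field of characteristic `0`, `M` an `n × n` matrix over
`k`, and `c ∈ k` not a root of unity. If `M` is similar to `c • M` (via some
`g ∈ GLₙ(k)`), then `M` is nilpotent. -/
theorem stmt1 (k : Type*) [Field k] [CharZero k]
    (n : ℕ) (M : Matrix (Fin n) (Fin n) k)
    (c : k) (hc : ∀ m : ℕ, 1 ≤ m → c ^ m ≠ 1)
    (g : GL (Fin n) k)
    (hsim : (g : Matrix (Fin n) (Fin n) k) * M * (↑g⁻¹ : Matrix (Fin n) (Fin n) k) = c • M) :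
    IsNilpotent M :=
  stmt1_general k n M c hc g hsim
end

section
/- Let ℓ be a prime number and let Π be a topological space. If ζ ∈ K is a root of unity (i.e. ζ^m = 1 for some integer m ≥ 1) and ‖ζ − 1‖ ≤ ℓ^{−c} for some rational number c > 1/(ℓ−1) (where ℓ^{−c} is the real number (ℓ:ℝ) raised to the power −c), then ζ = 1. -/
/-!
If `ζ ≠ 1` is a root of unity, some power `η` of it is a primitive `p`-th root of unity for a
prime `p`, and `‖η - 1‖ ≤ ‖ζ - 1‖` by the ultrametric inequality. Evaluating the `p`-th
cyclotomic polynomial at `1` gives `p = ∏ (1 - ηⁱ)` over `0 < i < p`, so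
`‖p‖ ≤ ‖ζ - 1‖ ^ (p - 1)`. For `p ≠ ℓ` this contradicts `‖p‖ = 1` (Bézout with `ℓ`, whose
norm is `< 1`); for `p = ℓ` it contradicts `‖ζ - 1‖ ^ (ℓ - 1) < ℓ⁻¹ = ‖ℓ‖`, which is what
`c > 1/(ℓ - 1)` provides.
-/

open Polynomial

lemma IsOfFinOrder.exists_prime_isPrimitiveRoot_pow {M : Type*} [CommMonoid M] {ζ : M}
    (hζ : IsOfFinOrder ζ) (h1 : ζ ≠ 1) : ∃ p k : ℕ, p.Prime ∧ IsPrimitiveRoot (ζ ^ k) p := by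
  set n := orderOf ζ
  have hn0 : n ≠ 0 := hζ.orderOf_pos.ne'
  have hp : n.minFac.Prime := Nat.minFac_prime (mt orderOf_eq_one_iff.mp h1)
  have hk : n / n.minFac ≠ 0 :=
    (Nat.div_pos (Nat.minFac_le (Nat.pos_of_ne_zero hn0)) hp.pos).ne'
  refine ⟨n.minFac, n / n.minFac, hp, ?_⟩
  have := (IsPrimitiveRoot.orderOf ζ).pow_of_dvd hk (Nat.div_dvd_of_dvd (Nat.minFac_dvd n))
  rwa [Nat.div_div_self (Nat.minFac_dvd n) hn0] at this

lemma pow_lt_inv_of_le_rpow_neg {ℓ c x : ℝ} {n : ℕ} (hℓ : 1 < ℓ) (hc : 1 < c * n) (hx : 0 ≤ x)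
    (hxc : x ≤ ℓ ^ (-c)) : x ^ n < ℓ⁻¹ :=
  calc x ^ n ≤ (ℓ ^ (-c)) ^ n := pow_le_pow_left₀ hx hxc n
    _ = ℓ ^ (-(c * n)) := by rw [← Real.rpow_natCast, ← Real.rpow_mul (by positivity), neg_mul]
    _ < ℓ ^ (-1 : ℝ) := Real.rpow_lt_rpow_of_exponent_lt hℓ (by linarith)
    _ = ℓ⁻¹ := Real.rpow_neg_one ℓ

section Ultrametric

variable {K : Type*} [NormedField K] [IsUltrametricDist K]

lemma norm_pow_sub_one_le_norm_sub_one {ζ : K} (hζ : ‖ζ‖ ≤ 1) (n : ℕ) :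
    ‖ζ ^ n - 1‖ ≤ ‖ζ - 1‖ := by
  rw [← geom_sum_mul, norm_mul]
  refine mul_le_of_le_one_left (norm_nonneg _) ?_
  refine IsUltrametricDist.norm_sum_le_of_forall_le_of_nonneg zero_le_one fun i _ => ?_
  simpa using pow_le_one₀ (norm_nonneg ζ) hζ

lemma norm_natCast_eq_one_of_coprime_s2 {m n : ℕ} (h : m.Coprime n) (hm : ‖(m : K)‖ < 1) :
    ‖(n : K)‖ = 1 := by
  refine (IsUltrametricDist.norm_natCast_le_one K n).antisymm (not_lt.mp fun hn => ?_)
  obtain ⟨a, b, hab⟩ := Nat.isCoprime_iff_coprime.mpr h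
  have hK : (a : K) * m + (b : K) * n = 1 := by exact_mod_cast congrArg (Int.cast : ℤ → K) hab
  have hlt (z : ℤ) (x : K) (hx : ‖x‖ < 1) : ‖(z : K) * x‖ < 1 := by
    rw [norm_mul]
    exact mul_lt_one_of_nonneg_of_lt_one_right (IsUltrametricDist.norm_intCast_le_one K z)
      (norm_nonneg _) hx
  have := (IsUltrametricDist.norm_add_le_max _ _).trans_lt (max_lt (hlt a _ hm) (hlt b _ hn))
  simp [hK] at this

/-- `p` is the value at `1` of the `p`-th cyclotomic polynomial, i.e. `∏ (1 - μ)` over the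
primitive `p`-th roots `μ`, each of which is a power of `η`. -/
lemma IsPrimitiveRoot.norm_natCast_le_norm_sub_one_pow {p : ℕ} [Fact p.Prime] {η : K}
    (hη : IsPrimitiveRoot η p) : ‖(p : K)‖ ≤ ‖η - 1‖ ^ (p - 1) := by
  have hprod : (p : K) = ∏ μ ∈ primitiveRoots p K, (1 - μ) := by
    rw [← eval_one_cyclotomic_prime (R := K), cyclotomic_eq_prod_X_sub_primitiveRoots hη,
      eval_prod]
    simp
  have hp : p.Prime := Fact.out
  have : NeZero p := ⟨hp.ne_zero⟩
  have hη1 : ‖η‖ ≤ 1 := (hη.isOfFinOrder hp.ne_zero).norm_eq_one.le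
  rw [hprod, norm_prod, ← Nat.totient_prime hp, ← hη.card_primitiveRoots, ← Finset.prod_const]
  refine Finset.prod_le_prod (fun _ _ => norm_nonneg _) fun μ hμ => ?_
  obtain ⟨i, -, rfl⟩ := hη.eq_pow_of_pow_eq_one ((mem_primitiveRoots hp.pos).mp hμ).pow_eq_one
  rw [norm_sub_rev]
  exact norm_pow_sub_one_le_norm_sub_one hη1 i

theorem IsOfFinOrder.eq_one_of_norm_sub_one_pow_lt {ℓ : ℕ} (hℓ : ℓ.Prime) (hℓ1 : ‖(ℓ : K)‖ < 1)
    {ζ : K} (hζ : IsOfFinOrder ζ) (h : ‖ζ - 1‖ ^ (ℓ - 1) < ‖(ℓ : K)‖) : ζ = 1 := by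
  by_contra hne
  obtain ⟨p, k, hp, hη⟩ := hζ.exists_prime_isPrimitiveRoot_pow hne
  have : Fact p.Prime := ⟨hp⟩
  have hle : ‖ζ ^ k - 1‖ ≤ ‖ζ - 1‖ := norm_pow_sub_one_le_norm_sub_one hζ.norm_eq_one.le k
  have hp_le := hη.norm_natCast_le_norm_sub_one_pow
  rcases eq_or_ne p ℓ with rfl | hpℓ
  · exact h.not_ge (hp_le.trans (pow_le_pow_left₀ (norm_nonneg _) hle _))
  · have hζ1 : ‖ζ - 1‖ < 1 :=
      (pow_lt_one_iff_of_nonneg (norm_nonneg _) (by have := hℓ.two_le; omega)).mp (h.trans hℓ1)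
    have hp1 : ‖(p : K)‖ = 1 :=
      norm_natCast_eq_one_of_coprime_s2 ((Nat.coprime_primes hℓ hp).mpr hpℓ.symm) hℓ1
    have := pow_lt_one₀ (n := p - 1) (norm_nonneg _) (hle.trans_lt hζ1)
      (by have := hp.two_le; omega)
    linarith

end Ultrametric

/-- Let `ℓ` be a prime and `K` a normed field with nonarchimedean norm
satisfying `‖(ℓ : K)‖ = (ℓ : ℝ)⁻¹`. If `ζ ∈ K` is a root of unity with
`‖ζ - 1‖ ≤ ℓ^{-c}` for some rational `c > 1/(ℓ-1)`, then `ζ = 1`. -/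
theorem stmt2 (ℓ : ℕ) (hℓprime : ℓ.Prime)
    (K : Type*) [NormedField K]
    (hna : IsNonarchimedean (fun x : K => ‖x‖))
    (hnorm : ‖(ℓ : K)‖ = (ℓ : ℝ)⁻¹)
    (ζ : K) (hζ : ∃ m : ℕ, 1 ≤ m ∧ ζ ^ m = 1)
    (c : ℚ) (hc : 1 / ((ℓ : ℚ) - 1) < c)
    (hnear : ‖ζ - 1‖ ≤ (ℓ : ℝ) ^ (-(c : ℝ))) :
    ζ = 1 := by
  have : IsUltrametricDist K := IsUltrametricDist.isUltrametricDist_of_isNonarchimedean_norm hna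
  have hℓ : (1 : ℝ) < ℓ := by exact_mod_cast hℓprime.one_lt
  have hℓ1 : ‖(ℓ : K)‖ < 1 := hnorm ▸ inv_lt_one_of_one_lt₀ hℓ
  have hcℓ : 1 < (c : ℝ) * ((ℓ - 1 : ℕ) : ℝ) := by
    have hℓq : (0 : ℚ) < ℓ - 1 := by
      have : (2 : ℚ) ≤ ℓ := by exact_mod_cast hℓprime.two_le
      linarith
    rw [Nat.cast_sub hℓprime.one_le, Nat.cast_one]
    exact_mod_cast (div_lt_iff₀ hℓq).mp hc
  refine (isOfFinOrder_iff_pow_eq_one.mpr hζ).eq_one_of_norm_sub_one_pow_lt hℓprime hℓ1 ?_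
  exact hnorm ▸ pow_lt_inv_of_le_rpow_neg hℓ hcℓ (norm_nonneg _) hnear
end

section
/- Let ℓ be a prime number and n ≥ 1 an integer. The set of unipotent n × n matrices over K is open in the set of quasi-unipotent n × n matrices over K for the subspace topology; equivalently, there exists an open subset V of the space of n × n matrices over K such that the unipotent matrices are exactly the intersection of V with the quasi-unipotent matrices. -/
/-!
Every eigenvalue `ζ` of a quasi-unipotent matrix is a root of unity, and in `K` a root of unity
`ζ ≠ 1` stays far from `1`: if the power `η` of `ζ` has prime order `p` then
`ℓ⁻¹ ≤ ‖p‖ ≤ ‖η - 1‖ ≤ ‖ζ - 1‖`. On the other hand, an eigenvalue `μ` of a matrix `B`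
over an ultrametric field satisfies `‖μ‖ ≤ maxᵢⱼ ‖Bᵢⱼ‖`. Applied to `B = (A - 1) ^ n`, whose
eigenvalues are the `(ζ - 1) ^ n`, this shows that the open set where all entries of `(A - 1) ^ n`
have norm `< ℓ⁻ⁿ` contains no quasi-unipotent matrix with an eigenvalue `≠ 1`, while it contains
every unipotent matrix since then `(A - 1) ^ n = 0`.
-/

open Polynomial

section RootsOfUnity

variable {K : Type*} [NormedField K] [IsUltrametricDist K]

lemma norm_natCast_eq_one_of_coprime_s5 {a b : ℕ} (hab : a.Coprime b) (ha : ‖(a : K)‖ < 1) :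
    ‖(b : K)‖ = 1 := by
  refine le_antisymm (IsUltrametricDist.norm_natCast_le_one K b) (not_lt.mp fun hb => ?_)
  obtain ⟨u, v, huv⟩ := Nat.isCoprime_iff_coprime.mpr hab
  have key : (u : K) * a + v * b = 1 := by exact_mod_cast congrArg (Int.cast : ℤ → K) huv
  have hu := IsUltrametricDist.norm_intCast_le_one K u
  have hv := IsUltrametricDist.norm_intCast_le_one K v
  have := IsUltrametricDist.norm_add_le_max ((u : K) * a) (v * b)
  rw [key, norm_one, norm_mul, norm_mul] at this
  rcases le_max_iff.mp this with h | h
  exacts [(h.trans (mul_le_of_le_one_left (norm_nonneg _) hu)).not_gt ha,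
    (h.trans (mul_le_of_le_one_left (norm_nonneg _) hv)).not_gt hb]

lemma inv_le_norm_natCast_of_prime {ℓ p : ℕ} (hℓ : ℓ.Prime) (hℓK : ‖(ℓ : K)‖ = (ℓ : ℝ)⁻¹)
    (hp : p.Prime) : (ℓ : ℝ)⁻¹ ≤ ‖(p : K)‖ := by
  by_cases hpℓ : p = ℓ
  · rw [hpℓ, hℓK]
  have hℓ1 : ‖(ℓ : K)‖ < 1 := by
    rw [hℓK]; exact inv_lt_one_of_one_lt₀ (by exact_mod_cast hℓ.one_lt)
  rw [norm_natCast_eq_one_of_coprime_s5 ((Nat.coprime_primes hℓ hp).mpr (Ne.symm hpℓ)) hℓ1]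
  exact inv_le_one_of_one_le₀ (by exact_mod_cast hℓ.one_lt.le)

lemma norm_pow_sub_one_le_s5 {ζ : K} (hζ : ‖ζ‖ ≤ 1) (i : ℕ) : ‖ζ ^ i - 1‖ ≤ ‖ζ - 1‖ := by
  rw [← geom_sum_mul, norm_mul]
  refine mul_le_of_le_one_left (norm_nonneg _) ?_
  exact IsUltrametricDist.norm_sum_le_of_forall_le_of_nonneg zero_le_one fun k _ => by
    rw [norm_pow]; exact pow_le_one₀ (norm_nonneg ζ) hζ

lemma norm_natCast_le_norm_sub_one_of_pow_eq_one {ζ : K} {q : ℕ} (hζq : ζ ^ q = 1)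
    (hζ : ζ ≠ 1) : ‖(q : K)‖ ≤ ‖ζ - 1‖ := by
  rcases q.eq_zero_or_pos with rfl | hq
  · simp
  have hnorm : ‖ζ‖ = 1 := (isOfFinOrder_iff_pow_eq_one.mpr ⟨q, hq, hζq⟩).norm_eq_one
  have hgeom : ∑ i ∈ Finset.range q, ζ ^ i = 0 := by
    have := geom_sum_mul ζ q
    rwa [hζq, sub_self, mul_eq_zero, or_iff_left (sub_ne_zero.mpr hζ)] at this
  -- the vanishing of `∑ ζ ^ i` writes `q` as `-∑ (ζ ^ i - 1)`
  have hq : (q : K) = -∑ i ∈ Finset.range q, (ζ ^ i - 1) := by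
    simp [Finset.sum_sub_distrib, hgeom]
  rw [hq, norm_neg]
  exact IsUltrametricDist.norm_sum_le_of_forall_le_of_nonneg (norm_nonneg _)
    fun i _ => norm_pow_sub_one_le_s5 hnorm.le i

lemma inv_le_norm_sub_one_of_pow_eq_one {ℓ : ℕ} (hℓ : ℓ.Prime) (hℓK : ‖(ℓ : K)‖ = (ℓ : ℝ)⁻¹)
    {ζ : K} {m : ℕ} (hm : m ≠ 0) (hζm : ζ ^ m = 1) (hζ : ζ ≠ 1) :
    (ℓ : ℝ)⁻¹ ≤ ‖ζ - 1‖ := by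
  have hfin : IsOfFinOrder ζ := isOfFinOrder_iff_pow_eq_one.mpr ⟨m, Nat.pos_of_ne_zero hm, hζm⟩
  set d := orderOf ζ
  have hd : 1 < d :=
    lt_of_le_of_ne (orderOf_pos_iff.mpr hfin) (Ne.symm (orderOf_eq_one_iff.not.mpr hζ))
  set p := d.minFac
  have hp : p.Prime := Nat.minFac_prime hd.ne'
  have hpow : (ζ ^ (d / p)) ^ p = 1 := by
    rw [← pow_mul, Nat.div_mul_cancel (Nat.minFac_dvd d), pow_orderOf_eq_one]
  have hne : ζ ^ (d / p) ≠ 1 :=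
    pow_ne_one_of_lt_orderOf (Nat.div_pos (Nat.minFac_le (by omega)) hp.pos).ne'
      (Nat.div_lt_self (by omega) hp.one_lt)
  calc (ℓ : ℝ)⁻¹ ≤ ‖(p : K)‖ := inv_le_norm_natCast_of_prime hℓ hℓK hp
    _ ≤ ‖ζ ^ (d / p) - 1‖ := norm_natCast_le_norm_sub_one_of_pow_eq_one hpow hne
    _ ≤ ‖ζ - 1‖ := norm_pow_sub_one_le_s5 hfin.norm_eq_one.le _

end RootsOfUnity

namespace Matrix

variable {ι K : Type*} [Fintype ι]

lemma norm_lt_of_mulVec_eq_smul [NormedField K] [IsUltrametricDist K] {B : Matrix ι ι K}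
    {v : ι → K} (hv : v ≠ 0) {μ : K} (h : B *ᵥ v = μ • v) {C : ℝ} (hB : ∀ i j, ‖B i j‖ < C) :
    ‖μ‖ < C := by
  obtain ⟨i₀, hi₀⟩ := Function.ne_iff.mp hv
  have : Nonempty ι := ⟨i₀⟩
  obtain ⟨i, -, hi⟩ := Finset.exists_max_image Finset.univ (fun i => ‖v i‖) ⟨i₀, Finset.mem_univ _⟩
  have hvi : 0 < ‖v i‖ := (norm_pos_iff.mpr hi₀).trans_le (hi i₀ (Finset.mem_univ _))
  obtain ⟨j, -, hj⟩ := IsUltrametricDist.exists_norm_finsetSum_le_of_nonempty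
    Finset.univ_nonempty (fun j => B i j * v j)
  refine lt_of_mul_lt_mul_right ?_ hvi.le
  calc ‖μ‖ * ‖v i‖ = ‖∑ j, B i j * v j‖ := by
        rw [← norm_mul, ← smul_eq_mul, ← Pi.smul_apply, ← h]; rfl
    _ ≤ ‖B i j‖ * ‖v j‖ := by rw [← norm_mul]; exact hj
    _ ≤ ‖B i j‖ * ‖v i‖ := by gcongr; exact hi j (Finset.mem_univ _)
    _ < C * ‖v i‖ := mul_lt_mul_of_pos_right (hB i j) hvi

variable [DecidableEq ι]


lemma aeval_mulVec_of_mulVec_eq_smul {R : Type*} [CommRing R] {A : Matrix ι ι R} {v : ι → R}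
    {r : R} (h : A *ᵥ v = r • v) (p : R[X]) : aeval A p *ᵥ v = p.eval r • v := by
  have := Module.End.aeval_apply_of_mem_apply_eq_smul (f := toLin' A) (p := p) (by simpa using h)
  have htoLin : aeval (toLin' A) p = toLin' (aeval A p) := aeval_algHom_apply toLinAlgEquiv' A p
  rwa [htoLin, toLin'_apply] at this

lemma exists_mulVec_eq_smul_of_isRoot_charpoly [Field K] {A : Matrix ι ι K} {r : K}
    (hr : A.charpoly.IsRoot r) : ∃ v ≠ 0, A *ᵥ v = r • v := by
  rw [← charpoly_toLin', ← Module.End.hasEigenvalue_iff_isRoot_charpoly] at hr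
  obtain ⟨v, hv⟩ := hr.exists_hasEigenvector
  exact ⟨v, hv.2, by simpa using hv.apply_eq_smul⟩

lemma eq_zero_of_isNilpotent_of_mulVec_eq_smul [Field K] {N : Matrix ι ι K} (hN : IsNilpotent N)
    {v : ι → K} (hv : v ≠ 0) {μ : K} (h : N *ᵥ v = μ • v) : μ = 0 := by
  obtain ⟨k, hk⟩ := hN
  have := aeval_mulVec_of_mulVec_eq_smul h (X ^ k)
  rw [map_pow, aeval_X, hk, zero_mulVec, eval_pow, eval_X, eq_comm, smul_eq_zero] at this
  exact pow_eq_zero_iff'.mp (this.resolve_right hv) |>.1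

lemma pow_card_eq_zero_of_isNilpotent [Field K] {N : Matrix ι ι K} (hN : IsNilpotent N) :
    N ^ Fintype.card ι = 0 := by
  have hchar : N.charpoly = X ^ Fintype.card ι :=
    sub_eq_zero.mp (isNilpotent_charpoly_sub_pow_of_isNilpotent hN).eq_zero
  simpa [hchar] using aeval_self_charpoly N

lemma isNilpotent_sub_one_of_forall_isRoot_charpoly [Field K] [IsAlgClosed K]
    {A : Matrix ι ι K} (h : ∀ r, A.charpoly.IsRoot r → r = 1) : IsNilpotent (A - 1) := by
  have hroots : A.charpoly.roots = Multiset.replicate (Fintype.card ι) 1 := by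
    refine Multiset.eq_replicate.mpr ⟨?_, fun r hr => h r (mem_roots'.mp hr).2⟩
    rw [splits_iff_card_roots.mp (IsAlgClosed.splits _), charpoly_natDegree_eq_dim]
  have hchar : A.charpoly = (X - C 1) ^ Fintype.card ι := by
    rw [(IsAlgClosed.splits _).eq_prod_roots_of_monic (charpoly_monic A), hroots,
      Multiset.map_replicate, Multiset.prod_replicate]
  exact ⟨Fintype.card ι, by simpa [hchar] using aeval_self_charpoly A⟩

end Matrix

theorem stmt5_general (ℓ : ℕ) (hℓprime : ℓ.Prime)
    (K : Type*) [NormedField K] [IsAlgClosed K]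
    (hna : IsNonarchimedean (fun x : K => ‖x‖))
    (hnorm : ‖(ℓ : K)‖ = (ℓ : ℝ)⁻¹)
    (n : ℕ) :
    ∃ V : Set (Matrix (Fin n) (Fin n) K), IsOpen V ∧
      {A : Matrix (Fin n) (Fin n) K | IsNilpotent (A - 1)} =
        V ∩ {A : Matrix (Fin n) (Fin n) K | ∃ m : ℕ, 1 ≤ m ∧ IsNilpotent (A ^ m - 1)} := by
  have : IsUltrametricDist K := IsUltrametricDist.isUltrametricDist_of_isNonarchimedean_norm hna
  refine ⟨{A | ∀ i j, ‖((A - 1) ^ n) i j‖ < (ℓ : ℝ)⁻¹ ^ n}, ?_, ?_⟩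
  · simp only [Set.ofPred_forall]
    exact isOpen_iInter_of_finite fun i => isOpen_iInter_of_finite fun j =>
      isOpen_lt (by fun_prop) continuous_const
  ext A
  refine ⟨fun hA => ⟨fun i j => ?_, 1, le_rfl, by simpa using hA⟩, fun ⟨hV, m, hm, hA⟩ => ?_⟩
  · have hzero := Matrix.pow_card_eq_zero_of_isNilpotent hA
    rw [Fintype.card_fin] at hzero
    simpa [hzero] using pow_pos (inv_pos.mpr (Nat.cast_pos.mpr hℓprime.pos : (0 : ℝ) < ℓ)) n
  refine Matrix.isNilpotent_sub_one_of_forall_isRoot_charpoly fun r hr => by_contra fun hr1 => ?_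
  obtain ⟨v, hv, hAv⟩ := Matrix.exists_mulVec_eq_smul_of_isRoot_charpoly hr
  have hAmv := Matrix.aeval_mulVec_of_mulVec_eq_smul hAv (X ^ m - 1 : K[X])
  have hA1nv := Matrix.aeval_mulVec_of_mulVec_eq_smul hAv ((X - 1) ^ n : K[X])
  simp only [map_sub, map_pow, aeval_X, map_one, eval_sub, eval_pow, eval_X, eval_one]
    at hAmv hA1nv
  have hrm : r ^ m = 1 :=
    sub_eq_zero.mp (Matrix.eq_zero_of_isNilpotent_of_mulVec_eq_smul hA hv hAmv)
  have hsmall : ‖(r - 1) ^ n‖ < (ℓ : ℝ)⁻¹ ^ n := Matrix.norm_lt_of_mulVec_eq_smul hv hA1nv hV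
  have hlarge : (ℓ : ℝ)⁻¹ ≤ ‖r - 1‖ :=
    inv_le_norm_sub_one_of_pow_eq_one hℓprime hnorm (by omega) hrm hr1
  rw [norm_pow] at hsmall
  exact hsmall.not_ge (pow_le_pow_left₀ (by positivity) hlarge n)

/-- Let `ℓ` be a prime and `K` an algebraically closed normed field with
nonarchimedean norm satisfying `‖(ℓ : K)‖ = (ℓ : ℝ)⁻¹`. For `n ≥ 1`, the set of unipotent
`n × n` matrices over `K` is open in the set of quasi-unipotent `n × n` matrices for the
subspace topology: there is an open set `V` of matrices whose intersection with the
quasi-unipotent matrices is exactly the set of unipotent matrices. -/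
theorem stmt5 (ℓ : ℕ) (hℓprime : ℓ.Prime)
    (K : Type*) [NormedField K] [IsAlgClosed K]
    (hna : IsNonarchimedean (fun x : K => ‖x‖))
    (hnorm : ‖(ℓ : K)‖ = (ℓ : ℝ)⁻¹)
    (n : ℕ) (hn : 1 ≤ n) :
    ∃ V : Set (Matrix (Fin n) (Fin n) K), IsOpen V ∧
      {A : Matrix (Fin n) (Fin n) K | IsNilpotent (A - 1)} =
        V ∩ {A : Matrix (Fin n) (Fin n) K | ∃ m : ℕ, 1 ≤ m ∧ IsNilpotent (A ^ m - 1)} :=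
  stmt5_general ℓ hℓprime K hna hnorm n
end

section
/- Let Π be a topological space, let B be a nonempty collection of closed subsets of Π that is downward directed (for all E₁, E₂ ∈ B there exists E ∈ B with E ⊆ E₁ ∩ E₂), and let σ : Π → C be a function to a set C such that every fiber σ⁻¹({c}) (c ∈ C) is compact. Then the image of the intersection equals the intersection of the images: σ(⋂_{E ∈ B} E) = ⋂_{E ∈ B} σ(E). -/
/-! If `c` lies in every `σ '' E`, the compact fiber `σ ⁻¹' {c}` meets every member of the
directed family of closed sets, so by compactness it meets their intersection. -/

open Set

theorem IsCompact.inter_iInter_nonempty_of_directed {X ι : Type*} [TopologicalSpace X]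
    [Nonempty ι] {K : Set X} (hK : IsCompact K) (t : ι → Set X) (htc : ∀ i, IsClosed (t i))
    (htd : Directed (· ⊇ ·) t) (hKt : ∀ i, (K ∩ t i).Nonempty) :
    (K ∩ ⋂ i, t i).Nonempty := by
  by_contra h
  obtain ⟨i, hi⟩ := hK.elim_directed_family_closed t htc (not_nonempty_iff_eq_empty.1 h) htd
  exact (hKt i).ne_empty hi

theorem Set.image_iInter_of_directed_of_isCompact_preimage_singleton {X Y ι : Type*}
    [TopologicalSpace X] [Nonempty ι] (f : X → Y) (hf : ∀ y, IsCompact (f ⁻¹' {y}))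
    (t : ι → Set X) (htc : ∀ i, IsClosed (t i)) (htd : Directed (· ⊇ ·) t) :
    f '' ⋂ i, t i = ⋂ i, f '' t i := by
  refine (image_iInter_subset t f).antisymm fun y hy => ?_
  have hfiber : ∀ i, (f ⁻¹' {y} ∩ t i).Nonempty := fun i => by
    obtain ⟨x, hx, rfl⟩ := mem_iInter.1 hy i
    exact ⟨x, rfl, hx⟩
  obtain ⟨x, rfl, hx⟩ := (hf y).inter_iInter_nonempty_of_directed t htc htd hfiber
  exact mem_image_of_mem f hx

/-- Let `P` be a topological space, `B` a nonempty downward-directed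
family of closed subsets of `P`, and `σ : Π → C` a map all of whose fibers are compact.
Then `σ(⋂_{E ∈ B} E) = ⋂_{E ∈ B} σ(E)`. -/
theorem stmt6 {P : Type*} [TopologicalSpace P] {C : Type*}
    (B : Set (Set P)) (hne : B.Nonempty)
    (hclosed : ∀ E ∈ B, IsClosed E)
    (hdir : ∀ E₁ ∈ B, ∀ E₂ ∈ B, ∃ E ∈ B, E ⊆ E₁ ∩ E₂)
    (σ : P → C) (hfib : ∀ c : C, IsCompact (σ ⁻¹' {c})) :
    σ '' (⋂ E ∈ B, E) = ⋂ E ∈ B, σ '' E := by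
  have : Nonempty B := hne.to_subtype
  have hB : DirectedOn (· ⊇ ·) B := fun E₁ h₁ E₂ h₂ => by
    obtain ⟨E, hE, hsub⟩ := hdir E₁ h₁ E₂ h₂
    exact ⟨E, hE, subset_inter_iff.1 hsub⟩
  rw [biInter_eq_iInter, biInter_eq_iInter]
  exact image_iInter_of_directed_of_isCompact_preimage_singleton σ hfib _
    (fun E => hclosed E E.2) hB.directed_val
end

section
/- Let P be a set of prime numbers, let G and H be profinite groups, and let α : G → H be a continuous group homomorphism. Then α(G^P) = α(G) ∩ H^P, where for a profinite group Γ, Γ^P denotes the set of elements whose supernatural order has all of its prime factors in P. -/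
/-! The inclusion `α(G^P) ⊆ α(G) ∩ H^P` holds because orders only drop under homomorphisms.
Conversely, let `α g₀ ∈ H^P`. For open normal `U ≤ G` and `V ≤ H`, put `N = U ∩ α⁻¹(V)` and
write the image of `g₀` in the finite group `G/N` as the product of its `P`-part `g₀ᵏ` and its
`P'`-part; the `P'`-part dies in `H/V`, because there the image of `g₀` is a `P`-element.
So the closed sets `{g | g is a P-element mod U, α g ≡ α g₀ mod V}` are nonempty and directed;
by compactness of `G` they have a common point `g`, which lies in `G^P` and has `α g = α g₀`
since the open normal subgroups of `H` intersect trivially. -/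

/-- For a set `P` of primes and a topological group `Γ`, `g ∈ Γ^P` means: for every open
normal subgroup `U` of `Γ`, every prime factor of the order of the image of `g` in `Γ ⧸ U`
belongs to `P`. For a profinite group `Γ`, this says that all prime factors of the
supernatural order of `g` lie in `P`. -/
def memPPart (P : Set ℕ) {Γ : Type*} [Group Γ] [TopologicalSpace Γ] (g : Γ) : Prop :=
  ∀ (U : Subgroup Γ) (_ : U.Normal) (_ : IsOpen (U : Set Γ)) (p : ℕ), p.Prime →
    p ∣ orderOf (QuotientGroup.mk g : Γ ⧸ U) → p ∈ P

def IsPNumber (P : Set ℕ) (n : ℕ) : Prop := ∀ p : ℕ, p.Prime → p ∣ n → p ∈ P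

namespace IsPNumber

variable {P : Set ℕ} {m n : ℕ}

lemma one : IsPNumber P 1 := fun _ hp h => (hp.not_dvd_one h).elim

lemma of_prime {p : ℕ} (hp : p.Prime) (hpP : p ∈ P) : IsPNumber P p := fun _ hq hqp =>
  (Nat.prime_dvd_prime_iff_eq hq hp).mp hqp ▸ hpP

lemma mul (hm : IsPNumber P m) (hn : IsPNumber P n) : IsPNumber P (m * n) := fun p hp h =>
  (hp.dvd_mul.mp h).elim (hm p hp) (hn p hp)

lemma of_dvd (h : IsPNumber P n) (hmn : m ∣ n) : IsPNumber P m := fun p hp hpm =>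
  h p hp (hpm.trans hmn)

lemma coprime (hm : IsPNumber P m) (hn : IsPNumber Pᶜ n) : m.Coprime n :=
  Nat.coprime_of_dvd fun p hp hpm hpn => hn p hp hpn (hm p hp hpm)

lemma eq_one_of_compl (h : IsPNumber P n) (hc : IsPNumber Pᶜ n) : n = 1 :=
  (Nat.coprime_self n).mp (h.coprime hc)

end IsPNumber

lemma Nat.exists_mul_eq_isPNumber_isPNumber_compl (P : Set ℕ) {n : ℕ} (hn : n ≠ 0) :
    ∃ a b, a * b = n ∧ IsPNumber P a ∧ IsPNumber Pᶜ b := by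
  induction n using induction_on_primes with
  | zero => exact absurd rfl hn
  | one => exact ⟨1, 1, rfl, .one, .one⟩
  | prime_mul p n hp ih =>
    obtain ⟨a, b, rfl, ha, hb⟩ := ih (right_ne_zero_of_mul hn)
    by_cases hpP : p ∈ P
    · exact ⟨p * a, b, by ring, (IsPNumber.of_prime hp hpP).mul ha, hb⟩
    · exact ⟨a, p * b, by ring, ha, (IsPNumber.of_prime hp hpP).mul hb⟩

lemma IsOfFinOrder.exists_pow_mul_pow_eq_self (P : Set ℕ) {Γ : Type*} [Group Γ] {x : Γ}
    (hx : IsOfFinOrder x) : ∃ k m : ℕ, x ^ k * x ^ m = x ∧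
      IsPNumber P (orderOf (x ^ k)) ∧ IsPNumber Pᶜ (orderOf (x ^ m)) := by
  obtain ⟨a, b, hab, ha, hb⟩ :=
    Nat.exists_mul_eq_isPNumber_isPNumber_compl P hx.orderOf_pos.ne'
  have hcop := ha.coprime hb
  obtain ⟨k, hka, hkb⟩ := Nat.chineseRemainder hcop 1 0
  obtain ⟨m, hma, hmb⟩ := Nat.chineseRemainder hcop 0 1
  have hkm : k + m ≡ 1 [MOD orderOf x] := hab ▸
    (Nat.modEq_and_modEq_iff_modEq_mul hcop).mp ⟨hka.add hma, hkb.add hmb⟩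
  refine ⟨k, m, ?_, ha.of_dvd (orderOf_dvd_of_pow_eq_one ?_),
    hb.of_dvd (orderOf_dvd_of_pow_eq_one ?_)⟩
  · rw [← pow_add, hx.pow_eq_pow_iff_modEq.mpr hkm, pow_one]
  · rw [← pow_mul, ← orderOf_dvd_iff_pow_eq_one, ← hab, mul_comm k]
    exact mul_dvd_mul_left a (Nat.modEq_zero_iff_dvd.mp hkb)
  · rw [← pow_mul, ← orderOf_dvd_iff_pow_eq_one, ← hab]
    exact mul_dvd_mul_right (Nat.modEq_zero_iff_dvd.mp hma) b

section Quotients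

variable {G H : Type*} [Group G] [Group H]

lemma orderOf_mk_dvd_of_le {N U : Subgroup G} [N.Normal] [U.Normal] (h : N ≤ U) (g : G) :
    orderOf (g : G ⧸ U) ∣ orderOf (g : G ⧸ N) :=
  orderOf_map_dvd (QuotientGroup.map N U (MonoidHom.id G) h) g

lemma exists_isPNumber_orderOf_mk_and_mk_map_eq (P : Set ℕ) (α : G →* H) {N : Subgroup G}
    [N.Normal] {V : Subgroup H} [V.Normal] (hNV : N ≤ V.comap α) {g₀ : G}
    (hfin : IsOfFinOrder (g₀ : G ⧸ N)) (hg₀ : IsPNumber P (orderOf (α g₀ : H ⧸ V))) :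
    ∃ g : G, IsPNumber P (orderOf (g : G ⧸ N)) ∧ (α g : H ⧸ V) = α g₀ := by
  set ψ := QuotientGroup.map N V α hNV
  obtain ⟨k, m, hkm, hk, hm⟩ := hfin.exists_pow_mul_pow_eq_self P
  have hψm : ψ ((g₀ : G ⧸ N) ^ m) = 1 := by
    refine orderOf_eq_one_iff.mp (IsPNumber.eq_one_of_compl (P := P) ?_ ?_)
    · rw [map_pow]
      exact hg₀.of_dvd (orderOf_pow_dvd m)
    · exact hm.of_dvd (orderOf_map_dvd ψ _)
  refine ⟨g₀ ^ k, by rwa [QuotientGroup.mk_pow], ?_⟩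
  calc (α (g₀ ^ k) : H ⧸ V) = ψ ((g₀ : G ⧸ N) ^ k) := by simp [ψ]
    _ = ψ ((g₀ : G ⧸ N) ^ k * (g₀ : G ⧸ N) ^ m) := by rw [map_mul, hψm, mul_one]
    _ = α g₀ := by rw [hkm]; rfl

end Quotients

section Topological

variable {G H : Type*} [Group G] [TopologicalSpace G] [Group H] [TopologicalSpace H]

instance : Inhabited (OpenNormalSubgroup G) := ⟨⟨⊤, inferInstanceAs (⊤ : Subgroup G).Normal⟩⟩

lemma memPPart_map {P : Set ℕ} (α : G →* H) (hα : Continuous α) {g : G} (hg : memPPart P g) :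
    memPPart P (α g) := fun V _ hV p hp hpd =>
  hg (V.comap α) inferInstance (hV.preimage hα) p hp
    (hpd.trans (orderOf_map_dvd (QuotientGroup.map _ V α le_rfl) g))

lemma isClosed_preimage_mk [IsTopologicalGroup G] {U : Subgroup G} (hU : IsOpen (U : Set G))
    (s : Set (G ⧸ U)) : IsClosed (((↑) : G → G ⧸ U) ⁻¹' s) :=
  have := QuotientGroup.discreteTopology hU
  (isClosed_discrete s).preimage QuotientGroup.continuous_mk

lemma exists_memPPart_and_forall_mk_map_eq [IsTopologicalGroup G] [CompactSpace G]
    [IsTopologicalGroup H] {P : Set ℕ} (α : G →* H) (hα : Continuous α) {g₀ : G}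
    (hg₀ : memPPart P (α g₀)) :
    ∃ g : G, memPPart P g ∧ ∀ V : OpenNormalSubgroup H, (α g : H ⧸ V.toSubgroup) = α g₀ := by
  let S : OpenNormalSubgroup G × OpenNormalSubgroup H → Set G := fun i =>
    {g | IsPNumber P (orderOf (g : G ⧸ i.1.toSubgroup))} ∩
      α ⁻¹' {h | (h : H ⧸ i.2.toSubgroup) = α g₀}
  have hS_closed i : IsClosed (S i) :=
    (isClosed_preimage_mk i.1.isOpen {x | IsPNumber P (orderOf x)}).inter
      ((isClosed_preimage_mk i.2.isOpen {(α g₀ : H ⧸ i.2.toSubgroup)}).preimage hα)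
  have hS_mono : Monotone S := by
    rintro ⟨U, V⟩ ⟨U', V'⟩ ⟨hU, hV⟩ g ⟨hgU, hgV⟩
    refine ⟨hgU.of_dvd (orderOf_mk_dvd_of_le hU g), ?_⟩
    simp only [Set.mem_preimage, Set.mem_ofPred_eq, QuotientGroup.eq] at hgV ⊢
    exact hV hgV
  have hS_nonempty : ∀ i, (S i).Nonempty := by
    rintro ⟨U, V⟩
    let N := U.toSubgroup ⊓ V.toSubgroup.comap α
    have hN : IsOpen (N : Set G) := U.isOpen.inter (V.isOpen.preimage hα)
    have := Subgroup.quotient_finite_of_isOpen N hN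
    obtain ⟨g, hgN, hgV⟩ := exists_isPNumber_orderOf_mk_and_mk_map_eq P α inf_le_right
      (isOfFinOrder_of_finite (g₀ : G ⧸ N)) (hg₀ V.toSubgroup inferInstance V.isOpen)
    exact ⟨g, hgN.of_dvd (orderOf_mk_dvd_of_le inf_le_left g), hgV⟩
  obtain ⟨g, hg⟩ := IsCompact.nonempty_iInter_of_directed_nonempty_isCompact_isClosed S
    hS_mono.directed_ge hS_nonempty (fun i => (hS_closed i).isCompact) hS_closed
  rw [Set.mem_iInter] at hg
  exact ⟨g, fun U hU hUo => (hg (⟨⟨U, hUo⟩, hU⟩, default)).1, fun V => (hg (default, V)).2⟩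

lemma eq_of_forall_openNormalSubgroup_mk_eq [IsTopologicalGroup H] [CompactSpace H]
    [TotallyDisconnectedSpace H] {x y : H} (h : ∀ V : OpenNormalSubgroup H,
      (x : H ⧸ V.toSubgroup) = y) : x = y := by
  by_contra hxy
  obtain ⟨V, hV⟩ := ProfiniteGrp.exist_openNormalSubgroup_sub_open_nhds_of_one
    (isOpen_compl_singleton (x := x⁻¹ * y)) (by simpa [eq_comm, inv_mul_eq_one] using hxy)
  exact hV (QuotientGroup.eq.mp (h V)) rfl

end Topological

theorem stmt8_general (P : Set ℕ)
    (G H : Type*) [Group G] [TopologicalSpace G] [IsTopologicalGroup G]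
    [CompactSpace G]
    [Group H] [TopologicalSpace H] [IsTopologicalGroup H]
    [CompactSpace H] [TotallyDisconnectedSpace H]
    (α : G →* H) (hα : Continuous α) :
    α '' {g : G | memPPart P g} = Set.range α ∩ {h : H | memPPart P h} := by
  ext h
  constructor
  · rintro ⟨g, hg, rfl⟩
    exact ⟨⟨g, rfl⟩, memPPart_map α hα hg⟩
  · rintro ⟨⟨g₀, rfl⟩, hg₀⟩
    obtain ⟨g, hg, hαg⟩ := exists_memPPart_and_forall_mk_map_eq α hα hg₀
    exact ⟨g, hg, eq_of_forall_openNormalSubgroup_mk_eq hαg⟩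

/-- Let `P` be a set of primes, `G`, `H` profinite groups and
`α : G → H` a continuous homomorphism. Then `α(G^P) = α(G) ∩ H^P`. -/
theorem stmt8 (P : Set ℕ) (hP : ∀ p ∈ P, p.Prime)
    (G H : Type*) [Group G] [TopologicalSpace G] [IsTopologicalGroup G]
    [CompactSpace G] [T2Space G] [TotallyDisconnectedSpace G]
    [Group H] [TopologicalSpace H] [IsTopologicalGroup H]
    [CompactSpace H] [T2Space H] [TotallyDisconnectedSpace H]
    (α : G →* H) (hα : Continuous α) :
    α '' {g : G | memPPart P g} = Set.range α ∩ {h : H | memPPart P h} :=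
  stmt8_general P G H α hα
end

section
/- Let k be a field, V a finite-dimensional vector space over k, G a group, and ρ : G → GL(V) a representation such that V is semisimple as a module over the group algebra k[G]. Let N be an abelian normal subgroup of G and let g ∈ N be such that the automorphism ρ(g) of V is unipotent, i.e. ρ(g) − id_V is nilpotent. Then ρ(g) = id_V. (In particular, in a semisimple representation, an element of a normal abelian subgroup acting unipotently acts trivially.) -/
/-!
The conjugates `x g x⁻¹` all lie in the abelian group `N`, so the operators `ρ (x g x⁻¹) - 1`
form a commuting family of nilpotent endomorphisms. Their common kernel `W` is a
subrepresentation, and commuting nilpotent operators have a common nonzero kernel vector in every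
nonzero subspace they preserve, so `W` meets every nonzero subrepresentation. In a semisimple
representation, a complement of `W` is then zero, i.e. `W = V`; in particular `ρ g = 1`.
-/

namespace Module.End

variable {R M : Type*} [Ring R] [AddCommGroup M] [Module R M]

theorem inf_ker_ne_bot_of_isNilpotent {f : Module.End R M} (hf : IsNilpotent f)
    {p : Submodule R M} (hp : p ∈ f.invtSubmodule) (hp0 : p ≠ ⊥) :
    p ⊓ LinearMap.ker f ≠ ⊥ := by
  obtain ⟨n, hn⟩ := hf
  intro hker
  have hinj : ∀ m, ∀ v ∈ p, (f ^ m) v = 0 → v = 0 := by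
    intro m
    induction m with
    | zero => simp
    | succ m ih =>
      intro v hv hfv
      rw [pow_succ, mul_apply] at hfv
      have hv' : v ∈ p ⊓ LinearMap.ker f :=
        ⟨hv, ih (f v) ((mem_invtSubmodule_iff_forall_mem_of_mem f).1 hp v hv) hfv⟩
      simpa [hker] using hv'
  exact hp0 ((Submodule.eq_bot_iff p).2 fun v hv => hinj n v hv (by simp [hn]))

theorem ker_mem_invtSubmodule_of_commute {f g : Module.End R M} (h : Commute f g) :
    LinearMap.ker f ∈ g.invtSubmodule := by
  rw [mem_invtSubmodule_iff_forall_mem_of_mem]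
  intro v hv
  rw [LinearMap.mem_ker] at hv ⊢
  rw [← mul_apply, h.eq, mul_apply, hv, map_zero]

theorem inf_iInf_ker_ne_bot_of_commute [IsArtinian R M] {ι : Type*} {u : ι → Module.End R M}
    (hnil : ∀ i, IsNilpotent (u i)) (hcomm : ∀ i j, Commute (u i) (u j))
    {p : Submodule R M} (hp : ∀ i, p ∈ (u i).invtSubmodule) (hp0 : p ≠ ⊥) :
    p ⊓ ⨅ i, LinearMap.ker (u i) ≠ ⊥ := by
  induction p using WellFoundedLT.induction with
  | ind p ih =>
  by_cases hker : ∀ i, p ≤ LinearMap.ker (u i)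
  · rwa [inf_eq_left.2 (le_iInf hker)]
  obtain ⟨i, hi⟩ := not_forall.1 hker
  have hlt : p ⊓ LinearMap.ker (u i) < p := inf_lt_left.2 hi
  have hinv : ∀ j, p ⊓ LinearMap.ker (u i) ∈ (u j).invtSubmodule := fun j =>
    Sublattice.inf_mem (hp j) (ker_mem_invtSubmodule_of_commute (hcomm i j))
  refine ne_bot_of_le_ne_bot (ih _ hlt hinv (inf_ker_ne_bot_of_isNilpotent (hnil i) (hp i) hp0)) ?_
  exact inf_le_inf_right _ inf_le_left

end Module.End

theorem eq_top_of_forall_inf_ne_bot {α : Type*} [Lattice α] [BoundedOrder α]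
    [ComplementedLattice α] {a : α} (h : ∀ b, b ≠ ⊥ → b ⊓ a ≠ ⊥) : a = ⊤ := by
  obtain ⟨b, hab⟩ := exists_isCompl a
  have hb : b = ⊥ := by
    by_contra hb
    exact h b hb hab.symm.inf_eq_bot
  simpa [hb] using hab.sup_eq_top

theorem Subrepresentation.toSubmodule_eq_bot {k G V : Type*} [Semiring k] [Monoid G]
    [AddCommMonoid V] [Module k V] {ρ : Representation k G V} {σ : Subrepresentation ρ} :
    σ.toSubmodule = ⊥ ↔ σ = ⊥ :=
  toSubmodule_injective.eq_iff (b := ⊥)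

namespace Representation

variable {k G V : Type*} [CommRing k] [Group G] [AddCommGroup V] [Module k V]
  (ρ : Representation k G V)

theorem map_conj_sub_one (g x : G) : ρ (x * g * x⁻¹) - 1 = ρ x * (ρ g - 1) * ρ x⁻¹ := by
  simp only [mul_sub, sub_mul, mul_one, ← map_mul, mul_inv_cancel, map_one]

theorem isNilpotent_conj_sub_one {g : G} (hg : IsNilpotent (ρ g - 1)) (x : G) :
    IsNilpotent (ρ (x * g * x⁻¹) - 1) := by
  obtain ⟨n, hn⟩ := hg
  refine ⟨n, ?_⟩
  rw [map_conj_sub_one, ← asGroupHom_apply, ← asGroupHom_apply ρ x⁻¹, map_inv, Units.conj_pow, hn,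
    mul_zero, zero_mul]

def fixedByConjugates (g : G) : Subrepresentation ρ where
  toSubmodule := ⨅ x, LinearMap.ker (ρ (x * g * x⁻¹) - 1)
  apply_mem_toSubmodule y v hv := by
    simp only [Submodule.mem_iInf, LinearMap.mem_ker] at hv ⊢
    intro x
    have hconj : y * (y⁻¹ * x * g * (y⁻¹ * x)⁻¹) * y⁻¹ = x * g * x⁻¹ := by group
    rw [← hconj, map_conj_sub_one, Module.End.mul_apply, Module.End.mul_apply,
      ← Module.End.mul_apply (ρ y⁻¹), ← map_mul, inv_mul_cancel, map_one, Module.End.one_apply,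
      hv, map_zero]

theorem fixedByConjugates_eq_top [IsArtinian k V] [ComplementedLattice (Subrepresentation ρ)]
    {g : G} (hg : IsNilpotent (ρ g - 1)) (hcomm : ∀ x y : G, Commute (x * g * x⁻¹) (y * g * y⁻¹)) :
    ρ.fixedByConjugates g = ⊤ := by
  refine eq_top_of_forall_inf_ne_bot fun σ hσ => ?_
  have hinv : ∀ x, σ.toSubmodule ∈ Module.End.invtSubmodule (ρ (x * g * x⁻¹) - 1) := fun x =>
    (Module.End.mem_invtSubmodule_iff_forall_mem_of_mem _).2 fun v hv =>
      sub_mem (σ.apply_mem_toSubmodule _ hv) hv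
  have hcomm' : ∀ x y, Commute (ρ (x * g * x⁻¹) - 1) (ρ (y * g * y⁻¹) - 1) := fun x y =>
    (((hcomm x y).map ρ).sub_right (Commute.one_right _)).sub_left (Commute.one_left _)
  rw [Ne, ← Subrepresentation.toSubmodule_eq_bot] at hσ ⊢
  exact Module.End.inf_iInf_ker_ne_bot_of_commute (ρ.isNilpotent_conj_sub_one hg) hcomm' hinv hσ

end Representation

/-- Let `k` be a field, `V` a finite-dimensional `k`-vector space, `G` a
group and `ρ` a representation of `G` on `V` that is semisimple (i.e. `V` is a semisimple
module over the group algebra `k[G]`). Let `N` be an abelian normal subgroup of `G` and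
let `g ∈ N` act unipotently (i.e. `ρ g - 1` is nilpotent). Then `ρ g = 1`. -/
theorem stmt9 (k : Type*) [Field k]
    (V : Type*) [AddCommGroup V] [Module k V] [FiniteDimensional k V]
    (G : Type*) [Group G]
    (ρ : Representation k G V)
    (hss : IsSemisimpleModule (MonoidAlgebra k G) ρ.asModule)
    (N : Subgroup G) (hNnormal : N.Normal)
    (hNab : ∀ a ∈ N, ∀ b ∈ N, a * b = b * a)
    (g : G) (hg : g ∈ N)
    (hunip : IsNilpotent (ρ g - 1)) :
    ρ g = 1 := by
  have : ComplementedLattice (Subrepresentation ρ) :=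
    (ρ.isSemisimpleRepresentation_iff_isSemisimpleModule_asModule).2 hss
  have htop := ρ.fixedByConjugates_eq_top hunip fun x y =>
    hNab _ (hNnormal.conj_mem g hg x) _ (hNnormal.conj_mem g hg y)
  ext v
  have hv : v ∈ ρ.fixedByConjugates g := htop ▸ trivial
  simpa [sub_eq_zero] using (Submodule.mem_iInf _).1 hv 1
end
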